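/- arXiv:1002.4388 — 2 statements merged into one kernel-verified Lean document; each statement's English description precedes it below -/
import Mathlib

section
/- (All optimal strategies define the same Lagrange operator.) Let (E_x)_{x∈X} and (F_x)_{x∈X} be two POVMs both attaining the maximal guessing probability P_guess for the discrimination problem (ρ_x)_{x∈X}. Then ∑_{x∈X} E_x ρ_x = ∑_{x∈X} F_x ρ_x; moreover this common matrix σ = ∑_x E_x ρ_x is Hermitian, σ − ρ_x is positive semidefinite for every x ∈ X, and Re Tr(σ) = P_guess. -/
/-!
Complementary slackness for the semidefinite program `max ∑ₓ Re Tr (Eₓ ρₓ)` over POVMs.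
If `E` is optimal, then for every vector `ψ`, with `P = ψ ψ*`, conjugating each `Eₓ` by
`1 - t P` and handing the freed weight `(2t - t² ‖ψ‖²) P` to outcome `j` gives another POVM;
the first-order term in `t` of its guessing probability shows
`⟨ψ, ρⱼ ψ⟩ ≤ Re ⟨ψ, (∑ₓ Eₓ ρₓ) ψ⟩`. Hence the Hermitian part `σ` of `∑ₓ Eₓ ρₓ` dominates every
`ρⱼ`, and `Re Tr σ = P_guess`. For any POVM `G` attaining `P_guess`, the traces
`Tr (Gₓ (σ - ρₓ))` of products of positive semidefinite matrices are `≥ 0` and sum to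
`Tr σ - P_guess = 0`, so every `Gₓ (σ - ρₓ)` vanishes and `∑ₓ Gₓ ρₓ = ∑ₓ Gₓ σ = σ`.
-/

open scoped ComplexOrder ComplexStarModule
open Matrix

theorem nonpos_of_forall_mul_add_sq_mul_nonpos {a b t₀ : ℝ} (ht₀ : 0 < t₀)
    (h : ∀ t, 0 < t → t ≤ t₀ → t * a + t ^ 2 * b ≤ 0) : a ≤ 0 := by
  have hlim : Filter.Tendsto (fun t => a + t * b) (nhdsWithin 0 (Set.Ioi 0)) (nhds a) := by
    have hcont : Continuous fun t : ℝ => a + t * b := by fun_prop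
    simpa using hcont.continuousWithinAt.tendsto (x := 0) (s := Set.Ioi 0)
  refine le_of_tendsto hlim ?_
  filter_upwards [Ioc_mem_nhdsGT ht₀] with t ⟨ht, htle⟩
  have hfactor : t * (a + t * b) ≤ 0 := by linarith [h t ht htle]
  exact nonpos_of_mul_nonpos_right hfactor ht

namespace Matrix

theorem posSemidef_sum_sub {R m X : Type*} [Ring R] [PartialOrder R] [StarRing R]
    [AddLeftMono R] [Fintype X] {A : X → Matrix m m R} (hA : ∀ x, (A x).PosSemidef) (x : X) :
    (∑ y, A y - A x).PosSemidef := by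
  classical
  rw [← Finset.sum_erase_eq_sub (Finset.mem_univ x)]
  exact posSemidef_sum _ fun y _ => hA y

section RCLike

variable {𝕜 m : Type*} [RCLike 𝕜] [Fintype m]

theorem PosSemidef.exists_eq_conjTranspose_mul_self [DecidableEq m] {A : Matrix m m 𝕜}
    (hA : A.PosSemidef) : ∃ B : Matrix m m 𝕜, A = Bᴴ * B := by
  open scoped MatrixOrder in
  exact ⟨CFC.sqrt A, by
    rw [(nonneg_iff_posSemidef.mp (CFC.sqrt_nonneg A)).1.eq, CFC.sqrt_mul_sqrt_self A hA.nonneg]⟩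

theorem trace_conjTranspose_mul_self_mul_conjTranspose_mul_self (C D : Matrix m m 𝕜) :
    (Cᴴ * C * (Dᴴ * D)).trace = ((C * Dᴴ)ᴴ * (C * Dᴴ)).trace := by
  rw [conjTranspose_mul, conjTranspose_conjTranspose, ← Matrix.mul_assoc, trace_mul_comm]
  simp only [Matrix.mul_assoc]

theorem PosSemidef.trace_mul_nonneg {A B : Matrix m m 𝕜} (hA : A.PosSemidef)
    (hB : B.PosSemidef) : 0 ≤ (A * B).trace := by
  classical
  obtain ⟨C, rfl⟩ := hA.exists_eq_conjTranspose_mul_self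
  obtain ⟨D, rfl⟩ := hB.exists_eq_conjTranspose_mul_self
  rw [trace_conjTranspose_mul_self_mul_conjTranspose_mul_self]
  exact (posSemidef_conjTranspose_mul_self _).trace_nonneg

theorem PosSemidef.mul_eq_zero_of_trace_mul_eq_zero {A B : Matrix m m 𝕜} (hA : A.PosSemidef)
    (hB : B.PosSemidef) (h : (A * B).trace = 0) : A * B = 0 := by
  classical
  obtain ⟨C, rfl⟩ := hA.exists_eq_conjTranspose_mul_self
  obtain ⟨D, rfl⟩ := hB.exists_eq_conjTranspose_mul_self
  rw [trace_conjTranspose_mul_self_mul_conjTranspose_mul_self,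
    trace_conjTranspose_mul_self_eq_zero_iff] at h
  rw [Matrix.mul_assoc, ← Matrix.mul_assoc C, h, Matrix.zero_mul, Matrix.mul_zero]

theorem posSemidef_sub_of_forall_re_le {A H : Matrix m m 𝕜} (hA : A.IsHermitian)
    (hH : H.IsHermitian)
    (h : ∀ ψ : m → 𝕜, RCLike.re (star ψ ⬝ᵥ (A *ᵥ ψ)) ≤ RCLike.re (star ψ ⬝ᵥ (H *ᵥ ψ))) :
    (H - A).PosSemidef := by
  refine .of_dotProduct_mulVec_nonneg (hH.sub hA) fun ψ => RCLike.nonneg_iff.mpr ⟨?_, ?_⟩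
  · rw [sub_mulVec, dotProduct_sub, map_sub, sub_nonneg]
    exact h ψ
  · exact (hH.sub hA).im_star_dotProduct_mulVec_self ψ

theorem vecMulVec_star_mul_self (ψ : m → 𝕜) :
    vecMulVec ψ (star ψ) * vecMulVec ψ (star ψ) = (star ψ ⬝ᵥ ψ) • vecMulVec ψ (star ψ) := by
  rw [vecMulVec_mul_vecMulVec, vecMulVec_smul]

theorem trace_vecMulVec_star_mul (ψ : m → 𝕜) (M : Matrix m m 𝕜) :
    (vecMulVec ψ (star ψ) * M).trace = star ψ ⬝ᵥ (M *ᵥ ψ) := by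
  rw [trace_mul_comm, mul_vecMulVec, trace_vecMulVec, dotProduct_comm]

end RCLike

section Complex

variable {m : Type*} [Fintype m]

omit [Fintype m] in
theorem isHermitian_realPart (M : Matrix m m ℂ) : (ℜ M : Matrix m m ℂ).IsHermitian :=
  isHermitian_iff_isSelfAdjoint.mpr (ℜ M).2

theorem star_dotProduct_realPart_mulVec (M : Matrix m m ℂ) (ψ : m → ℂ) :
    star ψ ⬝ᵥ ((ℜ M : Matrix m m ℂ) *ᵥ ψ) = ((star ψ ⬝ᵥ (M *ᵥ ψ)).re : ℂ) := by
  rw [realPart_apply_coe, smul_mulVec, dotProduct_smul, add_mulVec, dotProduct_add,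
    star_eq_conjTranspose, star_dotProduct ψ (Mᴴ *ᵥ ψ), star_mulVec, conjTranspose_conjTranspose,
    ← dotProduct_mulVec, Complex.star_def, Complex.add_conj, Complex.real_smul]
  push_cast
  ring

theorem re_trace_realPart (M : Matrix m m ℂ) : (ℜ M : Matrix m m ℂ).trace.re = M.trace.re := by
  rw [realPart_apply_coe, trace_smul, trace_add, star_eq_conjTranspose, trace_conjTranspose]
  simp only [Complex.real_smul, Complex.re_ofReal_mul, Complex.add_re, Complex.star_def,
    Complex.conj_re]
  ring

theorem re_trace_mul_mul_comm {A B C : Matrix m m ℂ} (hA : A.IsHermitian) (hB : B.IsHermitian)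
    (hC : C.IsHermitian) : (A * B * C).trace.re = (B * A * C).trace.re := by
  rw [← Complex.conj_re, ← Complex.star_def, ← trace_conjTranspose, conjTranspose_mul,
    conjTranspose_mul, hA.eq, hB.eq, hC.eq, trace_mul_comm]

theorem re_trace_one_sub_smul_conj_mul [DecidableEq m] {P E ρ : Matrix m m ℂ}
    (hP : P.IsHermitian) (hE : E.IsHermitian) (hρ : ρ.IsHermitian) (t : ℝ) :
    ((1 - (t : ℂ) • P) * E * (1 - (t : ℂ) • P) * ρ).trace.re =
      (E * ρ).trace.re - 2 * t * (P * E * ρ).trace.re + t ^ 2 * (P * E * P * ρ).trace.re := by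
  have hexpand : (1 - (t : ℂ) • P) * E * (1 - (t : ℂ) • P) * ρ =
      E * ρ - (t : ℂ) • (P * E * ρ) - (t : ℂ) • (E * P * ρ) +
        ((t ^ 2 : ℝ) : ℂ) • (P * E * P * ρ) := by
    simp only [Matrix.sub_mul, Matrix.mul_sub, Matrix.one_mul, Matrix.mul_one, smul_mul_assoc,
      mul_smul_comm, Matrix.mul_assoc]
    push_cast
    module
  rw [hexpand, trace_add, trace_sub, trace_sub, trace_smul, trace_smul, trace_smul]
  simp only [Complex.add_re, Complex.sub_re, smul_eq_mul, Complex.re_ofReal_mul]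
  rw [re_trace_mul_mul_comm hE hP hρ]
  ring

end Complex

end Matrix

section Discrimination

variable {X m : Type*} [Fintype X] [Fintype m] [DecidableEq m]

def IsPOVM (G : X → Matrix m m ℂ) : Prop := (∀ x, (G x).PosSemidef) ∧ ∑ x, G x = 1

def guessProb (ρ G : X → Matrix m m ℂ) : ℝ := ∑ x, ((G x * ρ x).trace).re

variable {ρ : X → Matrix m m ℂ}

omit [DecidableEq m] in
theorem re_trace_sum_mul_eq_guessProb (G : X → Matrix m m ℂ) :
    (∑ x, G x * ρ x).trace.re = guessProb ρ G := by
  rw [trace_sum, Complex.re_sum, guessProb]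

theorem sum_trace_mul_sub_of_sum_eq_one {G : X → Matrix m m ℂ} (hG : ∑ x, G x = 1)
    (σ : Matrix m m ℂ) :
    ∑ x, (G x * (σ - ρ x)).trace = σ.trace - ∑ x, (G x * ρ x).trace := by
  simp only [Matrix.mul_sub, trace_sub, Finset.sum_sub_distrib, ← trace_sum, ← Finset.sum_mul,
    hG, Matrix.one_mul]

theorem IsPOVM.guessProb_le_re_trace {G : X → Matrix m m ℂ} (hG : IsPOVM G) {σ : Matrix m m ℂ}
    (hσ : ∀ x, (σ - ρ x).PosSemidef) : guessProb ρ G ≤ σ.trace.re := by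
  have hsum : 0 ≤ ∑ x, (G x * (σ - ρ x)).trace :=
    Finset.sum_nonneg fun x _ => (hG.1 x).trace_mul_nonneg (hσ x)
  rw [sum_trace_mul_sub_of_sum_eq_one hG.2, sub_nonneg, Complex.le_def, Complex.re_sum] at hsum
  exact hsum.1

theorem IsPOVM.sum_mul_eq_of_guessProb_eq {G : X → Matrix m m ℂ} (hG : IsPOVM G)
    {σ : Matrix m m ℂ} (hσ : ∀ x, (σ - ρ x).PosSemidef) (h : guessProb ρ G = σ.trace.re) :
    ∑ x, G x * ρ x = σ := by
  have hnonneg : ∀ x, 0 ≤ (G x * (σ - ρ x)).trace := fun x => (hG.1 x).trace_mul_nonneg (hσ x)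
  have hsum : ∑ x, (G x * (σ - ρ x)).trace = 0 := by
    refine le_antisymm (Complex.le_def.mpr ⟨?_, ?_⟩) (Finset.sum_nonneg fun x _ => hnonneg x)
    · rw [sum_trace_mul_sub_of_sum_eq_one hG.2, Complex.sub_re, Complex.re_sum, ← h, guessProb,
        sub_self, Complex.zero_re]
    · exact (Complex.nonneg_iff.mp (Finset.sum_nonneg fun x _ => hnonneg x)).2.symm
  have hslack : ∀ x, G x * σ = G x * ρ x := fun x => by
    rw [← sub_eq_zero, ← Matrix.mul_sub]
    exact (hG.1 x).mul_eq_zero_of_trace_mul_eq_zero (hσ x)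
      ((Finset.sum_eq_zero_iff_of_nonneg fun x _ => hnonneg x).mp hsum x (Finset.mem_univ x))
  simp_rw [← hslack, ← Finset.sum_mul, hG.2, Matrix.one_mul]

end Discrimination

section Perturbation

variable {X m : Type*} [Fintype X] [DecidableEq X] [Fintype m] [DecidableEq m]

def conjPerturbation (E : X → Matrix m m ℂ) (j : X) (P : Matrix m m ℂ) (t c : ℂ) :
    X → Matrix m m ℂ :=
  fun x => (1 - t • P) * E x * (1 - t • P) + (Pi.single j (c • P) : X → Matrix m m ℂ) x

theorem sum_conjPerturbation {E : X → Matrix m m ℂ} (hE : ∑ x, E x = 1) (j : X)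
    (P : Matrix m m ℂ) (t c : ℂ) :
    ∑ x, conjPerturbation E j P t c x = (1 - t • P) * (1 - t • P) + c • P := by
  simp only [conjPerturbation, Finset.sum_add_distrib, ← Finset.sum_mul, ← Finset.mul_sum, hE,
    Matrix.mul_one, Finset.sum_pi_single', Finset.mem_univ, if_true]

theorem isPOVM_conjPerturbation {E : X → Matrix m m ℂ} (hE : IsPOVM E) (j : X) {ψ : m → ℂ}
    {r : ℝ} (hr : star ψ ⬝ᵥ ψ = r) {t : ℝ} (hc : 0 ≤ 2 * t - t ^ 2 * r) :
    IsPOVM (conjPerturbation E j (vecMulVec ψ (star ψ)) t (2 * t - t ^ 2 * r : ℝ)) := by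
  set P := vecMulVec ψ (star ψ)
  have hP : P.PosSemidef := posSemidef_vecMulVec_self_star ψ
  have hB : (1 - (t : ℂ) • P)ᴴ = 1 - (t : ℂ) • P := by
    simp [conjTranspose_sub, conjTranspose_smul, hP.1.eq]
  refine ⟨fun x => ?_, ?_⟩
  · have hconj := (hE.1 x).mul_mul_conjTranspose_same (1 - (t : ℂ) • P)
    rw [hB] at hconj
    refine hconj.add ?_
    rcases eq_or_ne x j with rfl | hx
    · rw [Pi.single_eq_same]
      exact hP.smul (Complex.zero_le_real.mpr hc)
    · rw [Pi.single_eq_of_ne hx]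
      exact .zero
  · rw [sum_conjPerturbation hE.2]
    simp only [Matrix.sub_mul, Matrix.mul_sub, Matrix.one_mul, Matrix.mul_one, smul_mul_assoc,
      mul_smul_comm, smul_smul, vecMulVec_star_mul_self, hr, P]
    push_cast
    module

theorem guessProb_conjPerturbation {ρ E : X → Matrix m m ℂ} {P : Matrix m m ℂ}
    (hP : P.IsHermitian) (hE : ∀ x, (E x).IsHermitian) (hρ : ∀ x, (ρ x).IsHermitian) (j : X)
    (t c : ℝ) :
    guessProb ρ (conjPerturbation E j P t c) =
      guessProb ρ E - 2 * t * (P * ∑ x, E x * ρ x).trace.re +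
        t ^ 2 * ∑ x, (P * E x * P * ρ x).trace.re + c * (P * ρ j).trace.re := by
  simp only [guessProb, conjPerturbation, Matrix.add_mul, trace_add, Complex.add_re,
    Finset.sum_add_distrib, re_trace_one_sub_smul_conj_mul hP (hE _) (hρ _),
    Finset.sum_sub_distrib]
  have hsingle : ∑ x, ((Pi.single j ((c : ℂ) • P) : X → Matrix m m ℂ) x * ρ x).trace.re =
      c * (P * ρ j).trace.re := by
    rw [Finset.sum_eq_single j (fun x _ hx => by simp [Pi.single_eq_of_ne hx]) (by simp),
      Pi.single_eq_same, smul_mul_assoc, trace_smul, smul_eq_mul, Complex.re_ofReal_mul]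
  have hlinear :
      ∑ x, 2 * t * (P * E x * ρ x).trace.re = 2 * t * (P * ∑ x, E x * ρ x).trace.re := by
    rw [← Finset.mul_sum, Finset.mul_sum _ _ P, trace_sum, Complex.re_sum]
    simp only [Matrix.mul_assoc]
  rw [hsingle, hlinear, ← Finset.mul_sum]

end Perturbation

section LagrangeOperator

variable {X m : Type*} [Fintype X] [Fintype m] [DecidableEq m] {ρ E : X → Matrix m m ℂ}

theorem IsPOVM.re_dotProduct_le_of_isMaxOn (hE : IsPOVM E) (hρ : ∀ x, (ρ x).IsHermitian)
    (hmax : IsMaxOn (guessProb ρ) {G | IsPOVM G} E) (j : X) (ψ : m → ℂ) :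
    (star ψ ⬝ᵥ (ρ j *ᵥ ψ)).re ≤ (star ψ ⬝ᵥ ((∑ x, E x * ρ x) *ᵥ ψ)).re := by
  classical
  set P := vecMulVec ψ (star ψ)
  have hP : P.IsHermitian := (posSemidef_vecMulVec_self_star ψ).1
  have hψ := dotProduct_star_self_nonneg ψ
  obtain ⟨r, hr0, hr⟩ : ∃ r : ℝ, 0 ≤ r ∧ star ψ ⬝ᵥ ψ = r :=
    ⟨_, (Complex.nonneg_iff.mp hψ).1,
      Complex.eq_re_of_ofReal_le (r := 0) (by rwa [Complex.ofReal_zero])⟩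
  have hgain : ∀ t, 0 < t → t ≤ 1 / (r + 1) →
      t * (2 * ((P * ρ j).trace.re - (P * ∑ x, E x * ρ x).trace.re)) +
        t ^ 2 * (∑ x, (P * E x * P * ρ x).trace.re - r * (P * ρ j).trace.re) ≤ 0 := by
    intro t ht htle
    have hc : 0 ≤ 2 * t - t ^ 2 * r := by
      have : t * (r + 1) ≤ 1 := (le_div_iff₀ (by positivity)).mp htle
      nlinarith
    have hle := isMaxOn_iff.mp hmax _ (isPOVM_conjPerturbation hE j hr hc)
    rw [guessProb_conjPerturbation hP (fun x => (hE.1 x).1) hρ] at hle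
    linarith
  have hfirst := nonpos_of_forall_mul_add_sq_mul_nonpos (by positivity) hgain
  rw [trace_vecMulVec_star_mul, trace_vecMulVec_star_mul] at hfirst
  linarith

theorem IsPOVM.posSemidef_realPart_sub_of_isMaxOn (hE : IsPOVM E) (hρ : ∀ x, (ρ x).PosSemidef)
    (hmax : IsMaxOn (guessProb ρ) {G | IsPOVM G} E) (j : X) :
    ((ℜ (∑ x, E x * ρ x) : Matrix m m ℂ) - ρ j).PosSemidef :=
  posSemidef_sub_of_forall_re_le (hρ j).1 (isHermitian_realPart _) fun ψ => by
    rw [star_dotProduct_realPart_mulVec, RCLike.re_to_complex, RCLike.re_to_complex,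
      Complex.ofReal_re]
    exact hE.re_dotProduct_le_of_isMaxOn (fun x => (hρ x).1) hmax j ψ

end LagrangeOperator

theorem qsd_lagrange_operator_unique_general {n : ℕ} {X : Type*} [Fintype X]
    (ρ : X → Matrix (Fin n) (Fin n) ℂ)
    (hρ : ∀ x, (ρ x).PosSemidef)
    (E F : X → Matrix (Fin n) (Fin n) ℂ)
    (hE : ∀ x, (E x).PosSemidef) (hEsum : (∑ x, E x) = 1)
    (hF : ∀ x, (F x).PosSemidef) (hFsum : (∑ x, F x) = 1)
    (hEopt : (∑ x, ((E x * ρ x).trace).re) =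
      sSup {p : ℝ | ∃ G : X → Matrix (Fin n) (Fin n) ℂ,
        (∀ x, (G x).PosSemidef) ∧ (∑ x, G x) = 1 ∧
        p = ∑ x, ((G x * ρ x).trace).re})
    (hFopt : (∑ x, ((F x * ρ x).trace).re) =
      sSup {p : ℝ | ∃ G : X → Matrix (Fin n) (Fin n) ℂ,
        (∀ x, (G x).PosSemidef) ∧ (∑ x, G x) = 1 ∧
        p = ∑ x, ((G x * ρ x).trace).re}) :
    (∑ x, E x * ρ x) = (∑ x, F x * ρ x) ∧
    (∑ x, E x * ρ x).IsHermitian ∧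
    (∀ x, ((∑ y, E y * ρ y) - ρ x).PosSemidef) ∧
    ((∑ x, E x * ρ x).trace).re =
      sSup {p : ℝ | ∃ G : X → Matrix (Fin n) (Fin n) ℂ,
        (∀ x, (G x).PosSemidef) ∧ (∑ x, G x) = 1 ∧
        p = ∑ x, ((G x * ρ x).trace).re} := by
  have hmax : IsMaxOn (guessProb ρ) {G | IsPOVM G} E := isMaxOn_iff.mpr fun G hG => by
    change guessProb ρ G ≤ ∑ x, ((E x * ρ x).trace).re
    rw [hEopt]
    refine le_csSup ⟨(∑ x, ρ x).trace.re, ?_⟩ ⟨G, hG.1, hG.2, rfl⟩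
    rintro _ ⟨G', hG', hG'sum, rfl⟩
    exact IsPOVM.guessProb_le_re_trace ⟨hG', hG'sum⟩ (posSemidef_sum_sub hρ)
  set σ : Matrix (Fin n) (Fin n) ℂ := ↑(ℜ (∑ x, E x * ρ x))
  have hσ : ∀ x, (σ - ρ x).PosSemidef :=
    IsPOVM.posSemidef_realPart_sub_of_isMaxOn ⟨hE, hEsum⟩ hρ hmax
  have hσtrace : σ.trace.re = guessProb ρ E := by
    rw [re_trace_realPart, re_trace_sum_mul_eq_guessProb]
  have hEσ : ∑ x, E x * ρ x = σ :=
    IsPOVM.sum_mul_eq_of_guessProb_eq ⟨hE, hEsum⟩ hσ hσtrace.symm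
  have hFσ : ∑ x, F x * ρ x = σ :=
    IsPOVM.sum_mul_eq_of_guessProb_eq ⟨hF, hFsum⟩ hσ (hσtrace ▸ hFopt.trans hEopt.symm)
  refine ⟨hEσ.trans hFσ.symm, hEσ ▸ isHermitian_realPart _, hEσ ▸ hσ, ?_⟩
  rw [re_trace_sum_mul_eq_guessProb, ← hEopt, guessProb]

/-- All optimal strategies define the same Lagrange operator: if two POVMs `E` and `F`
both attain the maximal guessing probability `P_guess`, then `∑ x, E x * ρ x = ∑ x, F x * ρ x`;
moreover this common matrix `σ` is Hermitian, `σ - ρ x` is positive semidefinite for all `x`,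
and `Re Tr σ = P_guess`. -/
theorem qsd_lagrange_operator_unique {n : ℕ} {X : Type*} [Fintype X]
    (ρ : X → Matrix (Fin n) (Fin n) ℂ)
    (hρ : ∀ x, (ρ x).PosSemidef)
    (hρtr : (∑ x, (ρ x).trace) = 1)
    (E F : X → Matrix (Fin n) (Fin n) ℂ)
    (hE : ∀ x, (E x).PosSemidef) (hEsum : (∑ x, E x) = 1)
    (hF : ∀ x, (F x).PosSemidef) (hFsum : (∑ x, F x) = 1)
    (hEopt : (∑ x, ((E x * ρ x).trace).re) =
      sSup {p : ℝ | ∃ G : X → Matrix (Fin n) (Fin n) ℂ,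
        (∀ x, (G x).PosSemidef) ∧ (∑ x, G x) = 1 ∧
        p = ∑ x, ((G x * ρ x).trace).re})
    (hFopt : (∑ x, ((F x * ρ x).trace).re) =
      sSup {p : ℝ | ∃ G : X → Matrix (Fin n) (Fin n) ℂ,
        (∀ x, (G x).PosSemidef) ∧ (∑ x, G x) = 1 ∧
        p = ∑ x, ((G x * ρ x).trace).re}) :
    (∑ x, E x * ρ x) = (∑ x, F x * ρ x) ∧
    (∑ x, E x * ρ x).IsHermitian ∧
    (∀ x, ((∑ y, E y * ρ y) - ρ x).PosSemidef) ∧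
    ((∑ x, E x * ρ x).trace).re =
      sSup {p : ℝ | ∃ G : X → Matrix (Fin n) (Fin n) ℂ,
        (∀ x, (G x).PosSemidef) ∧ (∑ x, G x) = 1 ∧
        p = ∑ x, ((G x * ρ x).trace).re} :=
  qsd_lagrange_operator_unique_general ρ hρ E F hE hEsum hF hFsum hEopt hFopt
end

section
/- (Ball-inclusion formulation of dual feasibility for qubits.) Let (ρ_x)_{x∈X} be a finite family of positive semidefinite 2×2 matrices with ρ_x = M(p_x, r_x) (so p_x ≥ 0), and let σ = M(t, s) be Hermitian. Then σ − ρ_x is positive semidefinite for every x ∈ X if and only if for every x ∈ X the closed Euclidean ball closedBall(r_x, p_x) is contained in the closed ball closedBall(s, t) in ℝ³. -/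
/-!
A Hermitian `2 × 2` matrix is positive semidefinite iff its trace and determinant are
nonnegative (they are the sum and product of its two eigenvalues). For `M(p, r)` these are `p`
and `(p² - ‖r‖²)/4`, so `M(p, r) ⪰ 0` iff `‖r‖ ≤ p`. Since `M` is linear,
`M(t, s) - M(p, r) = M(t - p, s - r)` is positive semidefinite iff `‖s - r‖ + p ≤ t`, which for
`p ≥ 0` is exactly the inclusion `closedBall r p ⊆ closedBall s t`.
-/

open scoped ComplexOrder

/-- The Pauli matrices. -/
noncomputable def pauli1 : Matrix (Fin 2) (Fin 2) ℂ := !![0, 1; 1, 0]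
noncomputable def pauli2 : Matrix (Fin 2) (Fin 2) ℂ := !![0, -Complex.I; Complex.I, 0]
noncomputable def pauli3 : Matrix (Fin 2) (Fin 2) ℂ := !![1, 0; 0, -1]

/-- The Bloch representation `M(p, r) = (1/2)(p·I + r₁σ₁ + r₂σ₂ + r₃σ₃)` for `r ∈ ℝ³`. -/
noncomputable def blochMat (p : ℝ) (r : EuclideanSpace ℝ (Fin 3)) :
    Matrix (Fin 2) (Fin 2) ℂ :=
  (1/2 : ℂ) • ((p : ℂ) • (1 : Matrix (Fin 2) (Fin 2) ℂ)
    + (r 0 : ℂ) • pauli1 + (r 1 : ℂ) • pauli2 + (r 2 : ℂ) • pauli3)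

lemma nonneg_and_nonneg_iff_add_nonneg_and_mul_nonneg {a b : ℝ} :
    0 ≤ a ∧ 0 ≤ b ↔ 0 ≤ a + b ∧ 0 ≤ a * b := by
  refine ⟨fun ⟨ha, hb⟩ ↦ ⟨add_nonneg ha hb, mul_nonneg ha hb⟩, fun ⟨hs, hp⟩ ↦ ?_⟩
  by_contra! h
  rcases le_or_gt 0 a with ha | ha
  · nlinarith [h ha]
  · nlinarith

namespace Matrix.IsHermitian

variable {𝕜 : Type*} [RCLike 𝕜]

theorem posSemidef_iff_trace_nonneg_and_det_nonneg {A : Matrix (Fin 2) (Fin 2) 𝕜}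
    (hA : A.IsHermitian) : A.PosSemidef ↔ 0 ≤ A.trace ∧ 0 ≤ A.det := by
  rw [hA.posSemidef_iff_eigenvalues_nonneg, hA.trace_eq_sum_eigenvalues,
    hA.det_eq_prod_eigenvalues, Fin.sum_univ_two, Fin.prod_univ_two, ← RCLike.ofReal_add,
    ← RCLike.ofReal_mul, RCLike.ofReal_nonneg, RCLike.ofReal_nonneg, Pi.le_def, Fin.forall_fin_two]
  exact nonneg_and_nonneg_iff_add_nonneg_and_mul_nonneg

end Matrix.IsHermitian

lemma blochMat_eq (p : ℝ) (r : EuclideanSpace ℝ (Fin 3)) :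
    blochMat p r = (1 / 2 : ℂ) •
      !![(p + r 2 : ℂ), r 0 - r 1 * Complex.I; r 0 + r 1 * Complex.I, p - r 2] := by
  ext i j
  fin_cases i <;> fin_cases j <;> simp [blochMat, pauli1, pauli2, pauli3] <;> ring

lemma isHermitian_blochMat (p : ℝ) (r : EuclideanSpace ℝ (Fin 3)) :
    (blochMat p r).IsHermitian := by
  rw [blochMat_eq]
  ext i j
  fin_cases i <;> fin_cases j <;> simp [Complex.ext_iff]

lemma trace_blochMat (p : ℝ) (r : EuclideanSpace ℝ (Fin 3)) :
    (blochMat p r).trace = p := by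
  rw [blochMat_eq, Matrix.trace_smul, Matrix.trace_fin_two_of]
  ring

lemma det_blochMat (p : ℝ) (r : EuclideanSpace ℝ (Fin 3)) :
    (blochMat p r).det = ((p ^ 2 - ‖r‖ ^ 2) / 4 : ℝ) := by
  rw [EuclideanSpace.real_norm_sq_eq, Fin.sum_univ_three, blochMat_eq,
    Matrix.det_smul, Fintype.card_fin, Matrix.det_fin_two_of]
  push_cast
  linear_combination (r 1 : ℂ) ^ 2 / 4 * Complex.I_sq

lemma posSemidef_blochMat_iff {p : ℝ} {r : EuclideanSpace ℝ (Fin 3)} :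
    (blochMat p r).PosSemidef ↔ ‖r‖ ≤ p := by
  rw [(isHermitian_blochMat p r).posSemidef_iff_trace_nonneg_and_det_nonneg, trace_blochMat,
    det_blochMat, Complex.zero_le_real, Complex.zero_le_real]
  constructor
  · rintro ⟨hp, h⟩
    exact abs_le_of_sq_le_sq' (by linarith) hp |>.2
  · intro h
    have hp := (norm_nonneg r).trans h
    exact ⟨hp, by nlinarith [norm_nonneg r]⟩

lemma blochMat_sub (t p : ℝ) (s r : EuclideanSpace ℝ (Fin 3)) :
    blochMat t s - blochMat p r = blochMat (t - p) (s - r) := by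
  simp only [blochMat, PiLp.sub_apply, Complex.ofReal_sub]
  module

section

variable {E : Type*} [NormedAddCommGroup E] [NormedSpace ℝ E] [Nontrivial E]

lemma exists_sameRay_norm_eq (x : E) {c : ℝ} (hc : 0 ≤ c) :
    ∃ y : E, SameRay ℝ x y ∧ ‖y‖ = c := by
  rcases eq_or_ne x 0 with rfl | hx
  · obtain ⟨y, hy⟩ := exists_norm_eq E hc
    exact ⟨y, SameRay.zero_left y, hy⟩
  · refine ⟨(c / ‖x‖) • x, SameRay.sameRay_nonneg_smul_right x (by positivity), ?_⟩
    rw [norm_smul, Real.norm_of_nonneg (by positivity), div_mul_cancel₀ _ (norm_ne_zero_iff.2 hx)]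

theorem Metric.closedBall_subset_closedBall_iff {x y : E} {ε δ : ℝ} (hε : 0 ≤ ε) :
    closedBall x ε ⊆ closedBall y δ ↔ dist x y + ε ≤ δ := by
  refine ⟨fun h ↦ ?_, fun h ↦ closedBall_subset_closedBall' (by linarith [dist_comm x y])⟩
  obtain ⟨v, hv, hvε⟩ := exists_sameRay_norm_eq (x - y) hε
  -- `x + v` is the point of `closedBall x ε` farthest from `y`
  have hmem := h (show x + v ∈ closedBall x ε by simp [hvε])
  rwa [mem_closedBall, dist_eq_norm, add_sub_right_comm, hv.norm_add, hvε, ← dist_eq_norm] at hmem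

end

theorem blochMat_feasible_iff_ball_inclusion_general {X : Type*}
    (pf : X → ℝ) (rv : X → EuclideanSpace ℝ (Fin 3))
    (ρ : X → Matrix (Fin 2) (Fin 2) ℂ)
    (hρdef : ∀ x, ρ x = blochMat (pf x) (rv x))
    (hρ : ∀ x, (ρ x).PosSemidef)
    (t : ℝ) (s : EuclideanSpace ℝ (Fin 3))
    (σ : Matrix (Fin 2) (Fin 2) ℂ)
    (hσdef : σ = blochMat t s) :
    (∀ x, (σ - ρ x).PosSemidef) ↔
      (∀ x, Metric.closedBall (rv x) (pf x) ⊆ Metric.closedBall s t) := by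
  refine forall_congr' fun x ↦ ?_
  have hp : 0 ≤ pf x := (norm_nonneg _).trans <| posSemidef_blochMat_iff.1 (hρdef x ▸ hρ x)
  rw [hσdef, hρdef x, blochMat_sub, posSemidef_blochMat_iff,
    Metric.closedBall_subset_closedBall_iff hp, dist_comm, dist_eq_norm, le_sub_iff_add_le]

/-- Ball-inclusion formulation of dual feasibility for qubits: `σ = M(t, s)` satisfies
`σ - ρ x ⪰ 0` for all `x` iff for every `x` the closed ball `closedBall (r x) (p x)`
is contained in `closedBall s t`. -/
theorem blochMat_feasible_iff_ball_inclusion {X : Type*} [Fintype X] [Nonempty X]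
    (pf : X → ℝ) (rv : X → EuclideanSpace ℝ (Fin 3))
    (ρ : X → Matrix (Fin 2) (Fin 2) ℂ)
    (hρdef : ∀ x, ρ x = blochMat (pf x) (rv x))
    (hρ : ∀ x, (ρ x).PosSemidef)
    (t : ℝ) (s : EuclideanSpace ℝ (Fin 3))
    (σ : Matrix (Fin 2) (Fin 2) ℂ)
    (hσdef : σ = blochMat t s) :
    (∀ x, (σ - ρ x).PosSemidef) ↔
      (∀ x, Metric.closedBall (rv x) (pf x) ⊆ Metric.closedBall s t) :=
  blochMat_feasible_iff_ball_inclusion_general pf rv ρ hρdef hρ t s σ hσdef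
end
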